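/- arXiv:1110.1105 — 2 statements merged into one kernel-verified Lean document; each statement's English description precedes it below -/
import Mathlib

section
/- Let α > 0 and let f : ℝ → ℝ admit an α-Lipschitz minorant m. Define f→(t) := m(0) + α t for t ≤ 0 and f→(t) := f(t) for t > 0, and let m→ be the α-Lipschitz minorant of f→. Then m→(t) = m(t) for all t ≥ 0. -/
/-!
Both inequalities on `[0, ∞)` come from one truncation. If `g` is `α`-Lipschitz, so is
`t ↦ min (g t) (g 0 + α t)`; it agrees with `g` on `[0, ∞)` and lies below the cone `g 0 + α t`
on `(-∞, 0]`. Hence `g ≤ m` on `[0, ∞)` whenever `m` is the minorant of a function that dominates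
`g` on `(0, ∞)` and the cone on `(-∞, 0]`. This applies to `g = m` and `f→`, whose left part is the
cone itself, and to `g = m→` and `f`, since `m→ 0 ≤ f→ 0 = m 0` and `m 0 + α t ≤ m t ≤ f t` for
`t ≤ 0`.
-/

open Filter Set

/-- A function `g : ℝ → ℝ` is `α`-Lipschitz if `|g s - g t| ≤ α * |s - t|` for all `s, t`. -/
def IsAlphaLipschitz (α : ℝ) (g : ℝ → ℝ) : Prop :=
  ∀ s t : ℝ, |g s - g t| ≤ α * |s - t|

/-- `m` is the `α`-Lipschitz minorant of `f`: the greatest `α`-Lipschitz function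
dominated by `f`. -/
def IsLipMinorant (α : ℝ) (f m : ℝ → ℝ) : Prop :=
  IsAlphaLipschitz α m ∧ (∀ t, m t ≤ f t) ∧
    ∀ g : ℝ → ℝ, IsAlphaLipschitz α g → (∀ t, g t ≤ f t) → ∀ t, g t ≤ m t

namespace IsAlphaLipschitz

variable {α : ℝ} {g h : ℝ → ℝ}

theorem nonneg (hg : IsAlphaLipschitz α g) : 0 ≤ α := by
  simpa using (abs_nonneg _).trans (hg 1 0)

theorem le_add_mul_abs (hg : IsAlphaLipschitz α g) (s t : ℝ) : g t ≤ g s + α * |t - s| := by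
  linarith [le_abs_self (g t - g s), hg t s]

theorem min (hg : IsAlphaLipschitz α g) (hh : IsAlphaLipschitz α h) :
    IsAlphaLipschitz α (fun t => Min.min (g t) (h t)) := fun s t =>
  (abs_min_sub_min_le_max _ _ _ _).trans (max_le (hg s t) (hh s t))

theorem le_cone_of_nonneg (hg : IsAlphaLipschitz α g) {t : ℝ} (ht : 0 ≤ t) : g t ≤ g 0 + α * t := by
  simpa [abs_of_nonneg ht] using hg.le_add_mul_abs 0 t

theorem cone_le_of_nonpos (hg : IsAlphaLipschitz α g) {t : ℝ} (ht : t ≤ 0) : g 0 + α * t ≤ g t := by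
  have := hg.le_add_mul_abs t 0
  rw [zero_sub, abs_neg, abs_of_nonpos ht] at this
  linarith

end IsAlphaLipschitz

theorem isAlphaLipschitz_const_add_mul {α : ℝ} (hα : 0 ≤ α) (c : ℝ) :
    IsAlphaLipschitz α (fun t => c + α * t) := fun s t => by
  rw [show c + α * s - (c + α * t) = α * (s - t) by ring, abs_mul, abs_of_nonneg hα]

theorem IsLipMinorant.le_of_le_of_cone_le {α : ℝ} {f m g : ℝ → ℝ} (hm : IsLipMinorant α f m)
    (hg : IsAlphaLipschitz α g) (hpos : ∀ t, 0 < t → g t ≤ f t)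
    (hcone : ∀ t, t ≤ 0 → g 0 + α * t ≤ f t) {t : ℝ} (ht : 0 ≤ t) : g t ≤ m t := by
  have htrunc : ∀ s, min (g s) (g 0 + α * s) ≤ f s := fun s => by
    rcases le_or_gt s 0 with hs | hs
    · exact (min_le_right _ _).trans (hcone s hs)
    · exact (min_le_left _ _).trans (hpos s hs)
  have := hm.2.2 _ (hg.min (isAlphaLipschitz_const_add_mul hg.nonneg (g 0))) htrunc t
  rwa [min_eq_left (hg.le_cone_of_nonneg ht)] at this

theorem minorant_right_splice_general (α : ℝ) (f m mright : ℝ → ℝ)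
    (hm : IsLipMinorant α f m)
    (hmr : IsLipMinorant α (fun t => if t ≤ 0 then m 0 + α * t else f t) mright) :
    ∀ t, (0 : ℝ) ≤ t → mright t = m t := by
  intro t ht
  apply le_antisymm
  · have hmr0 : mright 0 ≤ m 0 := by simpa using hmr.2.1 0
    refine hm.le_of_le_of_cone_le hmr.1 (fun s hs => ?_) (fun s hs => ?_) ht
    · simpa [hs.not_ge] using hmr.2.1 s
    · linarith [hm.1.cone_le_of_nonpos hs, hm.2.1 s]
  · refine hmr.le_of_le_of_cone_le hm.1 (fun s hs => ?_) (fun s hs => ?_) ht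
    · simpa [hs.not_ge] using hm.2.1 s
    · simp [hs]

theorem minorant_right_splice (α : ℝ) (hα : 0 < α) (f m mright : ℝ → ℝ)
    (hm : IsLipMinorant α f m)
    (hmr : IsLipMinorant α (fun t => if t ≤ 0 then m 0 + α * t else f t) mright) :
    ∀ t, (0 : ℝ) ≤ t → mright t = m t :=
  minorant_right_splice_general α f m mright hm hmr
end

section
/- Let α > 0 and let f : ℝ → ℝ be càdlàg with α-Lipschitz minorant m. If t₀ satisfies f(t₀) ∧ f(t₀⁻) > m(t₀), then there exists δ > 0 such that f(s) ∧ f(s⁻) > m(s) for all s with |s - t₀| < δ. -/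
open Filter Set

/-!
Choose `c` strictly between `m t₀` and `f t₀ ∧ f(t₀⁻)`. Right continuity and the left limit at `t₀`
give `c < f` on a whole neighbourhood of `t₀`, hence `c ≤ f(s⁻)` for `s` near `t₀` as well, while
`m < c` near `t₀` by continuity of `m`.
-/

open Topology

theorem IsAlphaLipschitz.continuous {α : ℝ} {g : ℝ → ℝ} (hg : IsAlphaLipschitz α g) :
    Continuous g :=
  (LipschitzWith.of_dist_le' fun s t => by simpa only [Real.dist_eq] using hg s t).continuous

section

variable {X Y : Type*} [TopologicalSpace X] [LinearOrder X] [TopologicalSpace Y] [LinearOrder Y]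
  [OrderClosedTopology Y] {f : X → Y}

theorem eventually_nhds_lt_of_lt_min {t : X} {L c : Y}
    (hr : ContinuousWithinAt f (Ici t) t) (hl : Tendsto f (𝓝[<] t) (𝓝 L))
    (hc : c < min (f t) L) : ∀ᶠ u in 𝓝 t, c < f u := by
  rw [← nhdsLT_sup_nhdsGE, eventually_sup]
  exact ⟨hl.eventually_const_lt (hc.trans_le (min_le_right _ _)),
    hr.eventually_const_lt (hc.trans_le (min_le_left _ _))⟩

theorem eventually_nhds_le_leftLim [OrderTopology X] [DenselyOrdered X] [NoMinOrder X]
    {fl : X → Y} (hl : ∀ s, Tendsto f (𝓝[<] s) (𝓝 (fl s))) {t : X} {c : Y}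
    (hf : ∀ᶠ u in 𝓝 t, c ≤ f u) : ∀ᶠ s in 𝓝 t, c ≤ fl s :=
  hf.eventually_nhds.mono fun s hs =>
    ge_of_tendsto (hl s) (eventually_nhdsWithin_of_eventually_nhds hs)

end

theorem contact_complement_isOpen_general (α : ℝ) (f fl m : ℝ → ℝ)
    (hrc : ∀ t : ℝ, ContinuousWithinAt f (Set.Ici t) t)
    (hll : ∀ t : ℝ, Filter.Tendsto f (nhdsWithin t (Set.Iio t)) (nhds (fl t)))
    (hm : IsLipMinorant α f m)
    (t₀ : ℝ) (h : m t₀ < min (f t₀) (fl t₀)) :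
    ∃ δ > (0 : ℝ), ∀ s : ℝ, |s - t₀| < δ → m s < min (f s) (fl s) := by
  obtain ⟨c, hmc, hc⟩ := exists_between h
  have hf : ∀ᶠ u in 𝓝 t₀, c < f u := eventually_nhds_lt_of_lt_min (hrc t₀) (hll t₀) hc
  have hfl : ∀ᶠ s in 𝓝 t₀, c ≤ fl s := eventually_nhds_le_leftLim hll (hf.mono fun _ => le_of_lt)
  have hm_lt : ∀ᶠ s in 𝓝 t₀, m s < c :=
    (hm.1.continuous.tendsto t₀).eventually_lt_const hmc
  obtain ⟨δ, hδ, hnear⟩ := Metric.eventually_nhds_iff.1 (hm_lt.and (hf.and hfl))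
  refine ⟨δ, hδ, fun s hs => ?_⟩
  obtain ⟨hms, hfs, hfls⟩ := hnear (by rwa [Real.dist_eq])
  exact lt_min (hms.trans hfs) (hms.trans_le hfls)

theorem contact_complement_isOpen (α : ℝ) (hα : 0 < α) (f fl m : ℝ → ℝ)
    (hrc : ∀ t : ℝ, ContinuousWithinAt f (Set.Ici t) t)
    (hll : ∀ t : ℝ, Filter.Tendsto f (nhdsWithin t (Set.Iio t)) (nhds (fl t)))
    (hm : IsLipMinorant α f m)
    (t₀ : ℝ) (h : m t₀ < min (f t₀) (fl t₀)) :
    ∃ δ > (0 : ℝ), ∀ s : ℝ, |s - t₀| < δ → m s < min (f s) (fl s) :=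
  contact_complement_isOpen_general α f fl m hrc hll hm t₀ h
end
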